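/- Minimum communication cost under an omniscient adversary (cost part of Theorem 2): let S and downloads Y_1, …, Y_d be random variables on a common probability space taking values in finite sets, let z_ro, z_wo, z_rw ≥ 0 and k ≤ d be integers with d > 3z_rw + 2z_wo + z_ro, set z_r = z_ro + z_rw and z_w = z_wo + z_rw, and let α, β ≥ 0 be reals. Suppose H(Y_i) ≤ β for every i, H(S | Y_Z) = H(S) for every Z ⊆ {1,…,d} with |Z| = z_r, H(S | Y_B) = 0 for every B ⊆ {1,…,d} with |B| = d − 2z_w, and H(S) = (k − 3z_rw − 2z_wo − z_ro)·α. Then the total download satisfies d·β ≥ d·(k − 3z_rw − 2z_wo − z_ro)·α / (d − 3z_rw − 2z_wo − z_ro). -/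

import Mathlib

/-!
Pick a decoding set `B` of size `d - 2 z_w` and a private set `Z ⊆ B` of size `z_r`. Then
`H(S) + H(Y_Z) = H(S, Y_Z) ≤ H(S, Y_B) = H(Y_B) ≤ H(Y_Z) + H(Y_{B \ Z}) ≤ H(Y_Z) + |B \ Z| β`
by privacy, monotonicity, decodability and subadditivity of entropy. As
`|B \ Z| = d - 3 z_rw - 2 z_wo - z_ro`, this says `H(S) ≤ (d - 3 z_rw - 2 z_wo - z_ro) β`.
-/

open Finset

/-- The probability that the random variable `X` takes the value `a`, under the
probability mass function `p` on the finite sample space `Ω`. -/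
noncomputable def probOf {Ω : Type*} [Fintype Ω] (p : Ω → ℝ) {A : Type*} [DecidableEq A]
    (X : Ω → A) (a : A) : ℝ :=
  ∑ ω ∈ Finset.univ.filter fun ω => X ω = a, p ω

/-- Shannon entropy of the random variable `X` with logarithm base `b`. -/
noncomputable def entropy {Ω : Type*} [Fintype Ω] (b : ℝ) (p : Ω → ℝ) {A : Type*}
    [Fintype A] [DecidableEq A] (X : Ω → A) : ℝ :=
  -∑ a : A, probOf p X a * Real.logb b (probOf p X a)

/-- Conditional Shannon entropy `H(X | Y)` with logarithm base `b`,
defined by the chain rule `H(X | Y) = H(X, Y) - H(Y)`. -/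
noncomputable def condEntropy {Ω : Type*} [Fintype Ω] (b : ℝ) (p : Ω → ℝ) {A B : Type*}
    [Fintype A] [DecidableEq A] [Fintype B] [DecidableEq B] (X : Ω → A) (Y : Ω → B) : ℝ :=
  entropy b p (fun ω => (X ω, Y ω)) - entropy b p Y

/-- The tuple `X_A = (X_i)_{i ∈ A}` of a family of random variables. -/
def tupleOn {Ω : Type*} {N : ℕ} {V : Fin N → Type*} (X : ∀ i, Ω → V i) (A : Finset (Fin N)) :
    Ω → ∀ i : A, V i :=
  fun ω i => X i ω

open Real

section Entropy

variable {Ω : Type*} [Fintype Ω] {b : ℝ} {p : Ω → ℝ}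

lemma probOf_nonneg (hp : ∀ ω, 0 ≤ p ω) {A : Type*} [DecidableEq A] (X : Ω → A) (a : A) :
    0 ≤ probOf p X a :=
  Finset.sum_nonneg fun ω _ => hp ω

lemma probOf_le_probOf_comp (hp : ∀ ω, 0 ≤ p ω) {A C : Type*} [DecidableEq A] [DecidableEq C]
    (X : Ω → A) (f : A → C) (a : A) :
    probOf p X a ≤ probOf p (fun ω => f (X ω)) (f a) :=
  Finset.sum_le_sum_of_subset_of_nonneg
    (Finset.monotone_filter_right _ fun _ _ => congrArg f) fun ω _ _ => hp ω

lemma sum_probOf_mul {A : Type*} [Fintype A] [DecidableEq A] (X : Ω → A) (h : A → ℝ) :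
    ∑ a, probOf p X a * h a = ∑ ω, p ω * h (X ω) := by
  rw [← Finset.sum_fiberwise Finset.univ X]
  refine Finset.sum_congr rfl fun a _ => ?_
  rw [probOf, Finset.sum_mul]
  exact Finset.sum_congr rfl fun ω hω => by rw [(Finset.mem_filter.mp hω).2]

lemma sum_probOf (hp1 : ∑ ω, p ω = 1) {A : Type*} [Fintype A] [DecidableEq A] (X : Ω → A) :
    ∑ a, probOf p X a = 1 := by
  simpa [hp1] using sum_probOf_mul (p := p) X fun _ => 1

lemma sum_probOf_mul_comp {A C : Type*} [Fintype A] [DecidableEq A] [Fintype C] [DecidableEq C]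
    (X : Ω → A) (f : A → C) (h : C → ℝ) :
    ∑ a, probOf p X a * h (f a) = ∑ c, probOf p (fun ω => f (X ω)) c * h c := by
  rw [sum_probOf_mul, sum_probOf_mul]

lemma entropy_comp_le (hb : 1 < b) (hp : ∀ ω, 0 ≤ p ω)
    {A C : Type*} [Fintype A] [DecidableEq A] [Fintype C] [DecidableEq C]
    (X : Ω → A) (f : A → C) :
    entropy b p (fun ω => f (X ω)) ≤ entropy b p X := by
  rw [entropy, entropy, neg_le_neg_iff,
    ← sum_probOf_mul_comp X f fun c => logb b (probOf p (fun ω => f (X ω)) c)]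
  refine Finset.sum_le_sum fun a _ => ?_
  rcases (probOf_nonneg hp X a).eq_or_lt with h | h
  · simp [← h]
  · exact mul_le_mul_of_nonneg_left
      (logb_le_logb_of_le hb h (probOf_le_probOf_comp hp X f a)) h.le

lemma sum_mul_logb_le_sum_mul_logb (hb : 1 < b) {ι : Type*} [Fintype ι] (r q : ι → ℝ)
    (hr : ∀ i, 0 ≤ r i) (hq : ∀ i, 0 ≤ q i) (hrq : ∀ i, 0 < r i → 0 < q i)
    (hsum : ∑ i, q i ≤ ∑ i, r i) :
    ∑ i, r i * logb b (q i) ≤ ∑ i, r i * logb b (r i) := by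
  have hlog : 0 < log b := log_pos hb
  -- termwise `r log (q / r) ≤ q - r`, from `log x ≤ x - 1`
  have key : ∀ i, r i * logb b (q i) - r i * logb b (r i) ≤ (q i - r i) / log b := by
    intro i
    rcases (hr i).eq_or_lt with h | h
    · simpa [← h] using div_nonneg (hq i) hlog.le
    · have hqi := hrq i h
      calc r i * logb b (q i) - r i * logb b (r i)
          = r i * log (q i / r i) / log b := by
            rw [← mul_sub, ← logb_div hqi.ne' h.ne', logb, mul_div_assoc]
        _ ≤ r i * (q i / r i - 1) / log b := by
            gcongr
            exact log_le_sub_one_of_pos (div_pos hqi h)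
        _ = (q i - r i) / log b := by field_simp
  have hdiff : ∑ i, (q i - r i) / log b ≤ 0 := by
    rw [← Finset.sum_div, Finset.sum_sub_distrib]
    exact div_nonpos_of_nonpos_of_nonneg (by linarith) hlog.le
  have := Finset.sum_le_sum fun i (_ : i ∈ Finset.univ) => key i
  rw [Finset.sum_sub_distrib] at this
  linarith

lemma entropy_pair_le (hb : 1 < b) (hp : ∀ ω, 0 ≤ p ω) (hp1 : ∑ ω, p ω = 1)
    {A B : Type*} [Fintype A] [DecidableEq A] [Fintype B] [DecidableEq B]
    (X : Ω → A) (Y : Ω → B) :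
    entropy b p (fun ω => (X ω, Y ω)) ≤ entropy b p X + entropy b p Y := by
  set r := probOf p fun ω => (X ω, Y ω)
  have hr : ∀ z, 0 ≤ r z := probOf_nonneg hp _
  have hrX : ∀ z, r z ≤ probOf p X z.1 := probOf_le_probOf_comp hp _ Prod.fst
  have hrY : ∀ z, r z ≤ probOf p Y z.2 := probOf_le_probOf_comp hp _ Prod.snd
  have hmargX : ∑ z, r z * logb b (probOf p X z.1) = ∑ x, probOf p X x * logb b (probOf p X x) :=
    sum_probOf_mul_comp (fun ω => (X ω, Y ω)) Prod.fst fun x => logb b (probOf p X x)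
  have hmargY : ∑ z, r z * logb b (probOf p Y z.2) = ∑ y, probOf p Y y * logb b (probOf p Y y) :=
    sum_probOf_mul_comp (fun ω => (X ω, Y ω)) Prod.snd fun y => logb b (probOf p Y y)
  have hmarg : ∑ z, r z * logb b (probOf p X z.1 * probOf p Y z.2) =
      ∑ x, probOf p X x * logb b (probOf p X x) + ∑ y, probOf p Y y * logb b (probOf p Y y) := by
    rw [← hmargX, ← hmargY, ← Finset.sum_add_distrib]
    refine Finset.sum_congr rfl fun z _ => ?_
    rcases (hr z).eq_or_lt with h | h
    · simp [← h]
    · rw [logb_mul (h.trans_le (hrX z)).ne' (h.trans_le (hrY z)).ne', mul_add]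
  have hgibbs := sum_mul_logb_le_sum_mul_logb hb r (fun z => probOf p X z.1 * probOf p Y z.2) hr
    (fun z => mul_nonneg (probOf_nonneg hp _ _) (probOf_nonneg hp _ _))
    (fun z hz => mul_pos (hz.trans_le (hrX z)) (hz.trans_le (hrY z)))
    (by
      rw [Fintype.sum_prod_type, ← Fintype.sum_mul_sum, sum_probOf hp1, sum_probOf hp1, one_mul]
      exact (sum_probOf hp1 _).ge)
  rw [hmarg] at hgibbs
  simp only [entropy]
  linarith

lemma entropy_eq_zero_of_subsingleton (hp1 : ∑ ω, p ω = 1) {A : Type*} [Fintype A]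
    [DecidableEq A] [Subsingleton A] (X : Ω → A) : entropy b p X = 0 := by
  have h : ∀ a : A, (Finset.univ.filter fun ω => X ω = a) = Finset.univ := fun a => by
    ext ω; simp [Subsingleton.elim (X ω) a]
  simp [entropy, probOf, h, hp1]

end Entropy

section Tuples

variable {Ω : Type*} [Fintype Ω] {b : ℝ} {p : Ω → ℝ}
  {N : ℕ} {V : Fin N → Type*} [∀ i, Fintype (V i)] [∀ i, DecidableEq (V i)]

lemma entropy_tupleOn_union_le (hb : 1 < b) (hp : ∀ ω, 0 ≤ p ω) (hp1 : ∑ ω, p ω = 1)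
    (Y : ∀ i, Ω → V i) (s t : Finset (Fin N)) :
    entropy b p (tupleOn Y (s ∪ t)) ≤ entropy b p (tupleOn Y s) + entropy b p (tupleOn Y t) := by
  let glue : (∀ i : s, V i) × (∀ i : t, V i) → ∀ i : (s ∪ t : Finset (Fin N)), V i :=
    fun u i => if h : i.1 ∈ s then u.1 ⟨i, h⟩
      else u.2 ⟨i, (Finset.mem_union.mp i.2).resolve_left h⟩
  have hglue : tupleOn Y (s ∪ t) = fun ω => glue (tupleOn Y s ω, tupleOn Y t ω) := by
    funext ω i
    simp only [glue, tupleOn]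
    split_ifs <;> rfl
  rw [hglue]
  exact (entropy_comp_le hb hp _ glue).trans (entropy_pair_le hb hp hp1 _ _)

lemma entropy_tupleOn_singleton_le (hb : 1 < b) (hp : ∀ ω, 0 ≤ p ω)
    (Y : ∀ i, Ω → V i) (a : Fin N) :
    entropy b p (tupleOn Y {a}) ≤ entropy b p (Y a) := by
  let spread : V a → ∀ i : ({a} : Finset (Fin N)), V i :=
    fun v i => cast (congrArg V (Finset.mem_singleton.mp i.2)).symm v
  have hspread : tupleOn Y {a} = fun ω => spread (Y a ω) := by
    funext ω ⟨i, hi⟩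
    obtain rfl := Finset.mem_singleton.mp hi
    rfl
  rw [hspread]
  exact entropy_comp_le hb hp _ spread

lemma entropy_tupleOn_le_sum (hb : 1 < b) (hp : ∀ ω, 0 ≤ p ω) (hp1 : ∑ ω, p ω = 1)
    (Y : ∀ i, Ω → V i) (s : Finset (Fin N)) :
    entropy b p (tupleOn Y s) ≤ ∑ i ∈ s, entropy b p (Y i) := by
  induction s using Finset.induction_on with
  | empty => rw [Finset.sum_empty, entropy_eq_zero_of_subsingleton hp1]
  | insert a s ha ih =>
    rw [Finset.sum_insert ha, Finset.insert_eq]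
    linarith [entropy_tupleOn_union_le hb hp hp1 Y {a} s, entropy_tupleOn_singleton_le hb hp Y a]

theorem entropy_le_sum_sdiff_of_condEntropy (hb : 1 < b) (hp : ∀ ω, 0 ≤ p ω)
    (hp1 : ∑ ω, p ω = 1) {σ : Type*} [Fintype σ] [DecidableEq σ] (S : Ω → σ)
    (Y : ∀ i, Ω → V i) {Z B : Finset (Fin N)} (hZB : Z ⊆ B)
    (hpriv : condEntropy b p S (tupleOn Y Z) = entropy b p S)
    (hdec : condEntropy b p S (tupleOn Y B) = 0) :
    entropy b p S ≤ ∑ i ∈ B \ Z, entropy b p (Y i) := by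
  have hmono : entropy b p (fun ω => (S ω, tupleOn Y Z ω)) ≤
      entropy b p (fun ω => (S ω, tupleOn Y B ω)) :=
    entropy_comp_le hb hp (fun ω => (S ω, tupleOn Y B ω)) (Prod.map id (Finset.restrict₂ hZB))
  have hsplit := entropy_tupleOn_union_le hb hp hp1 Y Z (B \ Z)
  rw [Finset.union_sdiff_of_subset hZB] at hsplit
  have hrest := entropy_tupleOn_le_sum hb hp hp1 Y (B \ Z)
  rw [condEntropy] at hpriv hdec
  linarith

end Tuples

theorem omniscient_min_communication_cost_general
    {Ω : Type*} [Fintype Ω] (b : ℝ) (hb : 1 < b)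
    (p : Ω → ℝ) (hp : ∀ ω, 0 ≤ p ω) (hp1 : ∑ ω, p ω = 1)
    {σ : Type*} [Fintype σ] [DecidableEq σ] (S : Ω → σ)
    (d k zro zwo zrw : ℕ) (hd : 3 * zrw + 2 * zwo + zro < d)
    {V : Fin d → Type*} [∀ i, Fintype (V i)] [∀ i, DecidableEq (V i)]
    (Y : ∀ i, Ω → V i)
    (α β : ℝ)
    (hdl : ∀ i, entropy b p (Y i) ≤ β)
    (hpriv : ∀ Z : Finset (Fin d), Z.card = zro + zrw →
      condEntropy b p S (tupleOn Y Z) = entropy b p S)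
    (hdec : ∀ B : Finset (Fin d), B.card = d - 2 * (zwo + zrw) →
      condEntropy b p S (tupleOn Y B) = 0)
    (hS : entropy b p S = ((k : ℝ) - 3 * (zrw : ℝ) - 2 * (zwo : ℝ) - (zro : ℝ)) * α) :
    (d : ℝ) * β ≥
      (d : ℝ) * (((k : ℝ) - 3 * (zrw : ℝ) - 2 * (zwo : ℝ) - (zro : ℝ)) * α) /
        ((d : ℝ) - 3 * (zrw : ℝ) - 2 * (zwo : ℝ) - (zro : ℝ)) := by
  obtain ⟨B, -, hB⟩ := Finset.exists_subset_card_eq (s := (Finset.univ : Finset (Fin d)))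
    (n := d - 2 * (zwo + zrw)) (by simp)
  obtain ⟨Z, hZB, hZ⟩ := Finset.exists_subset_card_eq (s := B) (n := zro + zrw) (by omega)
  have hcard : (B \ Z).card = d - (3 * zrw + 2 * zwo + zro) := by
    rw [Finset.card_sdiff_of_subset hZB]; omega
  have hbound : entropy b p S ≤ (B \ Z).card * β := by
    calc entropy b p S ≤ ∑ i ∈ B \ Z, entropy b p (Y i) :=
          entropy_le_sum_sdiff_of_condEntropy hb hp hp1 S Y hZB (hpriv Z hZ) (hdec B hB)
      _ ≤ (B \ Z).card * β := by
          simpa using Finset.sum_le_card_nsmul _ _ β fun i _ => hdl i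
  rw [hcard, Nat.cast_sub hd.le, hS] at hbound
  push_cast at hbound
  have hpos : (0 : ℝ) < d - 3 * zrw - 2 * zwo - zro := by
    have : ((3 * zrw + 2 * zwo + zro : ℕ) : ℝ) < d := by exact_mod_cast hd
    push_cast at this
    linarith
  rw [ge_iff_le, div_le_iff₀ hpos]
  linarith [mul_le_mul_of_nonneg_left hbound (Nat.cast_nonneg d)]

/-- Minimum communication cost under an omniscient adversary (cost part of
Theorem 2): if each download `Y_i` has entropy at most `β`, any `z_r` downloads
are independent of the secret, the user can decode from any `d - 2z_w`
downloads, and the secret has the capacity-achieving size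
`(k - 3z_rw - 2z_wo - z_ro)·α`, then
`d·β ≥ d·(k - 3z_rw - 2z_wo - z_ro)·α / (d - 3z_rw - 2z_wo - z_ro)`. -/
theorem omniscient_min_communication_cost
    {Ω : Type*} [Fintype Ω] (b : ℝ) (hb : 1 < b)
    (p : Ω → ℝ) (hp : ∀ ω, 0 ≤ p ω) (hp1 : ∑ ω, p ω = 1)
    {σ : Type*} [Fintype σ] [DecidableEq σ] (S : Ω → σ)
    (d k zro zwo zrw : ℕ) (hkd : k ≤ d) (hd : 3 * zrw + 2 * zwo + zro < d)
    {V : Fin d → Type*} [∀ i, Fintype (V i)] [∀ i, DecidableEq (V i)]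
    (Y : ∀ i, Ω → V i)
    (α β : ℝ) (hα : 0 ≤ α) (hβ : 0 ≤ β)
    (hdl : ∀ i, entropy b p (Y i) ≤ β)
    (hpriv : ∀ Z : Finset (Fin d), Z.card = zro + zrw →
      condEntropy b p S (tupleOn Y Z) = entropy b p S)
    (hdec : ∀ B : Finset (Fin d), B.card = d - 2 * (zwo + zrw) →
      condEntropy b p S (tupleOn Y B) = 0)
    (hS : entropy b p S = ((k : ℝ) - 3 * (zrw : ℝ) - 2 * (zwo : ℝ) - (zro : ℝ)) * α) :
    (d : ℝ) * β ≥
      (d : ℝ) * (((k : ℝ) - 3 * (zrw : ℝ) - 2 * (zwo : ℝ) - (zro : ℝ)) * α) /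
        ((d : ℝ) - 3 * (zrw : ℝ) - 2 * (zwo : ℝ) - (zro : ℝ)) :=
  omniscient_min_communication_cost_general b hb p hp hp1 S d k zro zwo zrw hd Y α β hdl hpriv hdec
    hS
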